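/- arXiv:2412.10583 — 2 statements merged into one kernel-verified Lean document; each statement's English description precedes it below -/
import Mathlib

section
/- Let M ∈ ℝ^{l×n×p} be such that M∗M^⊤ is t-invertible, and let P_M = M^⊤ ∗ (M∗M^⊤)^{-1} ∗ M. Then for every X ∈ ℝ^{n×s×p} and Y ∈ ℝ^{l×s×p}, one has ⟨X − P_M∗X, M^⊤∗Y⟩ = 0, and consequently ‖(X − P_M∗X) + M^⊤∗Y‖_F² = ‖X − P_M∗X‖_F² + ‖M^⊤∗Y‖_F². -/
open Matrix
open scoped BigOperators

/-- A real third-order tensor with row index `I`, column index `J`, and `p` frontal slices. -/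
abbrev Tensor (I J : Type*) (p : ℕ) := I → J → Fin p → ℝ

namespace Tensor

variable {I J K : Type*} {p : ℕ}

/-- Block-circulant matricization: `bcirc A [(i,k),(j,l)] = A i j ((k - l) mod p)`. -/
def bcirc (A : Tensor I J p) : Matrix (I × Fin p) (J × Fin p) ℝ :=
  Matrix.of fun ik jl => A ik.1 jl.1 (ik.2 - jl.2)

/-- Unfolding along the second mode: `unfold B [(j,k), i] = B j i k`. -/
def unfold {S : Type*} (B : Tensor J S p) : Matrix (J × Fin p) S ℝ :=
  Matrix.of fun jk s => B jk.1 s jk.2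

/-- The t-product, the unique tensor with `unfold (A ∗ B) = bcirc A * unfold B`. -/
def tprod [Fintype J] (A : Tensor I J p) (B : Tensor J K p) : Tensor I K p :=
  fun i s k => ∑ j : J, ∑ l : Fin p, A i j (k - l) * B j s l

/-- Tensor transpose: `Aᵀ j i k = A i j ((-k) mod p)`. -/
def ttrans (A : Tensor I J p) : Tensor J I p := fun j i k => A i j (-k)

/-- The identity tensor: first frontal slice is the identity, the others are zero. -/
def tid (I : Type*) [DecidableEq I] (p : ℕ) : Tensor I I p :=
  fun i j k => if i = j ∧ (k : ℕ) = 0 then 1 else 0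

/-- t-invertibility of a square tensor. -/
def TInvertible [Fintype I] [DecidableEq I] (S : Tensor I I p) : Prop :=
  ∃ T : Tensor I I p, tprod S T = tid I p ∧ tprod T S = tid I p

open Classical in
/-- The t-inverse of a square tensor (junk value when not t-invertible). -/
noncomputable def tinv [Fintype I] [DecidableEq I] (S : Tensor I I p) : Tensor I I p :=
  if h : TInvertible S then h.choose else 0

/-- The projection tensor `P_M = Mᵀ ∗ (M ∗ Mᵀ)⁻¹ ∗ M`. -/
noncomputable def proj [Fintype I] [DecidableEq I] [Fintype J] (M : Tensor I J p) :
    Tensor J J p :=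
  tprod (ttrans M) (tprod (tinv (tprod M (ttrans M))) M)

/-- The projection tensor `P_{Mᵀ} = M ∗ (Mᵀ ∗ M)⁻¹ ∗ Mᵀ`. -/
noncomputable def projT [Fintype I] [Fintype J] [DecidableEq J] (M : Tensor I J p) :
    Tensor I I p :=
  tprod M (tprod (tinv (tprod (ttrans M) M)) (ttrans M))

/-- The Frobenius inner product of two tensors. -/
def tinner [Fintype I] [Fintype J] (A B : Tensor I J p) : ℝ :=
  ∑ i : I, ∑ j : J, ∑ k : Fin p, A i j k * B i j k

/-- The squared Frobenius norm of a tensor. -/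
def frobSq [Fintype I] [Fintype J] (A : Tensor I J p) : ℝ :=
  ∑ i : I, ∑ j : J, ∑ k : Fin p, (A i j k) ^ 2

/-- The Frobenius norm of a tensor. -/
noncomputable def frobNorm [Fintype I] [Fintype J] (A : Tensor I J p) : ℝ :=
  Real.sqrt (frobSq A)

/-- The subtensor of the row slices of `U` indexed by `μ`. -/
def rowSub (U : Tensor I J p) (μ : Finset I) : Tensor {i // i ∈ μ} J p :=
  fun i => U i.1

/-- The `j`-th lateral slice of `U`, as an `I × 1 × p` tensor. -/
def latSlice (U : Tensor I J p) (j : J) : Tensor I (Fin 1) p :=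
  fun i _ k => U i j k

/-- One (block) Kaczmarz step for the system with operator `U`, sampled row block `μ`,
current iterate `X` and measurement block `Bμ`:
`X ← X - U_μᵀ ∗ (U_μ ∗ U_μᵀ)⁻¹ ∗ (U_μ ∗ X - Bμ)`. -/
noncomputable def kaczStep [DecidableEq I] [Fintype J] (U : Tensor I J p) (μ : Finset I)
    (X : Tensor J K p) (Bμ : Tensor {i // i ∈ μ} K p) : Tensor J K p :=
  X - tprod (ttrans (rowSub U μ))
    (tprod (tinv (tprod (rowSub U μ) (ttrans (rowSub U μ))))
      (tprod (rowSub U μ) X - Bμ))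

/-- One extended (column-like) step:
`W ← W - U_{:j:} ∗ (U_{:j:}ᵀ ∗ U_{:j:})⁻¹ ∗ (U_{:j:}ᵀ ∗ W)`. -/
noncomputable def extStep [Fintype I] (U : Tensor I J p) (j : J) (W : Tensor I K p) :
    Tensor I K p :=
  W - tprod (latSlice U j)
    (tprod (tinv (tprod (ttrans (latSlice U j)) (latSlice U j)))
      (tprod (ttrans (latSlice U j)) W))

end Tensor

/-- Squared Frobenius norm of a real matrix. -/
def matFrobSq {I J : Type*} [Fintype I] [Fintype J] (A : Matrix I J ℝ) : ℝ :=
  ∑ i : I, ∑ j : J, (A i j) ^ 2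

/-- Spectral norm (largest singular value) of a real matrix, as the supremum of `‖A x‖`
over unit vectors `x`. -/
noncomputable def specNorm {I J : Type*} [Fintype I] [Fintype J] (A : Matrix I J ℝ) : ℝ :=
  sSup {r : ℝ | ∃ x : J → ℝ, (∑ j : J, (x j) ^ 2) = 1 ∧
    r = Real.sqrt (∑ i : I, (A.mulVec x i) ^ 2)}

/-- Smallest eigenvalue of a symmetric real matrix, via the Rayleigh quotient:
`σ_min(S) = inf {xᵀ S x : ‖x‖ = 1}`. -/
noncomputable def minEig {I : Type*} [Fintype I] (S : Matrix I I ℝ) : ℝ :=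
  sInf {r : ℝ | ∃ x : I → ℝ, (∑ i : I, (x i) ^ 2) = 1 ∧
    r = ∑ i : I, x i * S.mulVec x i}

namespace Tensor

variable {I J K S : Type*} {p : ℕ}

lemma bcirc_ttrans [NeZero p] (A : Tensor I J p) :
    bcirc (ttrans A) = (bcirc A)ᵀ := by
  ext jk il
  simp only [bcirc, ttrans, Matrix.transpose_apply, Matrix.of_apply]
  rw [neg_sub]

lemma unfold_tprod [NeZero p] [Fintype J] (A : Tensor I J p) (B : Tensor J K p) :
    unfold (tprod A B) = bcirc A * unfold B := by
  ext ik s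
  simp only [unfold, tprod, bcirc, Matrix.mul_apply, Matrix.of_apply]
  rw [Fintype.sum_prod_type]

lemma tinner_eq_trace [NeZero p] [Fintype I] [Fintype K] (A B : Tensor I K p) :
    tinner A B = ((unfold A)ᵀ * unfold B).trace := by
  simp only [tinner, unfold, Matrix.trace, Matrix.diag, Matrix.mul_apply,
    Matrix.transpose_apply, Matrix.of_apply]
  rw [Finset.sum_comm]
  simp [Fintype.sum_prod_type]

lemma tinner_adj [NeZero p] [Fintype I] [Fintype J] [Fintype K]
    (A : Tensor I J p) (B : Tensor J K p) (C : Tensor I K p) :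
    tinner (tprod A B) C = tinner B (tprod (ttrans A) C) := by
  rw [tinner_eq_trace, tinner_eq_trace, unfold_tprod, unfold_tprod, bcirc_ttrans,
    Matrix.transpose_mul, Matrix.mul_assoc]

lemma bcirc_injective [NeZero p] : Function.Injective (bcirc (I := I) (J := J) (p := p)) := by
  intro A B hAB
  funext i j k
  have := congrFun (congrFun hAB (i, k)) (j, 0)
  simpa [bcirc] using this

lemma bcirc_tprod [NeZero p] [Fintype J] (A : Tensor I J p) (B : Tensor J K p) :
    bcirc (tprod A B) = bcirc A * bcirc B := by
  ext ik jl
  obtain ⟨i, k⟩ := ik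
  obtain ⟨j', l'⟩ := jl
  simp only [bcirc, tprod, Matrix.mul_apply, Matrix.of_apply, Fintype.sum_prod_type]
  refine Finset.sum_congr rfl fun j _ => ?_
  refine Fintype.sum_equiv (Equiv.addRight l') _ _ fun m => ?_
  simp only [Equiv.coe_addRight, add_sub_cancel_right]
  rw [sub_add_eq_sub_sub, sub_right_comm]

lemma tprod_assoc [NeZero p] [Fintype J] [Fintype K]
    (A : Tensor I J p) (B : Tensor J K p) (C : Tensor K S p) :
    tprod (tprod A B) C = tprod A (tprod B C) := by
  apply bcirc_injective
  rw [bcirc_tprod, bcirc_tprod, bcirc_tprod, bcirc_tprod, Matrix.mul_assoc]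

lemma tid_tprod [NeZero p] [Fintype I] [DecidableEq I] (B : Tensor I K p) :
    tprod (tid I p) B = B := by
  funext i s k
  simp only [tprod, tid]
  have hkl : ∀ l : Fin p, (((k - l : Fin p) : ℕ) = 0) ↔ (l = k) := fun l => by
    rw [← Fin.val_zero p, Fin.val_eq_val, sub_eq_zero, eq_comm]
  simp only [hkl]
  simp [ite_and]

lemma tprod_sub [Fintype J] (A : Tensor I J p) (B C : Tensor J K p) :
    tprod A (B - C) = tprod A B - tprod A C := by
  funext i s k
  simp only [tprod, Pi.sub_apply, mul_sub, Finset.sum_sub_distrib]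

lemma tprod_tinv_right [Fintype I] [DecidableEq I] {T : Tensor I I p}
    (h : TInvertible T) : tprod T (tinv T) = tid I p := by
  rw [tinv, dif_pos h]
  exact h.choose_spec.1

lemma frobSq_add [Fintype I] [Fintype K] (A B : Tensor I K p) :
    frobSq (A + B) = frobSq A + frobSq B + 2 * tinner A B := by
  simp only [frobSq, tinner, Pi.add_apply, Finset.mul_sum, ← Finset.sum_add_distrib]
  refine Finset.sum_congr rfl fun i _ => Finset.sum_congr rfl fun j _ =>
    Finset.sum_congr rfl fun k _ => ?_
  ring

end Tensor

open Tensor in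
/-- orthogonality `⟨X − P_M∗X, Mᵀ∗Y⟩ = 0` and the Pythagorean identity
`‖(X − P_M∗X) + Mᵀ∗Y‖_F² = ‖X − P_M∗X‖_F² + ‖Mᵀ∗Y‖_F²`. -/
theorem stmt1 {l n p s : ℕ} (M : Tensor (Fin l) (Fin n) p)
    (h : TInvertible (tprod M (ttrans M)))
    (X : Tensor (Fin n) (Fin s) p) (Y : Tensor (Fin l) (Fin s) p) :
    tinner (X - tprod (proj M) X) (tprod (ttrans M) Y) = 0 ∧
    frobSq ((X - tprod (proj M) X) + tprod (ttrans M) Y) =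
      frobSq (X - tprod (proj M) X) + frobSq (tprod (ttrans M) Y) := by
  rcases Nat.eq_zero_or_pos p with hp | hp
  · subst hp
    constructor
    · simp [tinner]
    · simp [frobSq]
  · haveI : NeZero p := ⟨hp.ne'⟩
    have hMP : tprod M (tprod (proj M) X) = tprod M X := by
      rw [proj, tprod_assoc, tprod_assoc, ← tprod_assoc, ← tprod_assoc,
        tprod_tinv_right h, tid_tprod]
    have hz : tprod M (X - tprod (proj M) X) = 0 := by
      rw [tprod_sub, hMP, sub_self]
    have horth : tinner (X - tprod (proj M) X) (tprod (ttrans M) Y) = 0 := by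
      rw [← tinner_adj, hz]
      simp [tinner]
    exact ⟨horth, by rw [frobSq_add, horth]; ring⟩
end

section
/- Let M_1, …, M_r be real third-order tensors, each M_i ∈ ℝ^{l_i×n×p} with M_i∗M_i^⊤ t-invertible, and let w_1, …, w_r ≥ 0 with Σ_i w_i = 1. Then for every X ∈ ℝ^{n×s×p}, Σ_{i=1}^r w_i ‖P_{M_i}∗X‖_F² ≥ σ_min(Σ_{i=1}^r w_i · bcirc(P_{M_i})) · ‖X‖_F², where σ_min denotes the smallest eigenvalue of the symmetric (np)×(np) matrix Σ_i w_i bcirc(P_{M_i}). -/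
open Matrix
open scoped BigOperators

section AuxLemmas
open Tensor

variable {p : ℕ} {I J K : Type*}

lemma aux_bcirc_tprod [NeZero p] [Fintype J] (A : Tensor I J p) (B : Tensor J K p) :
    bcirc (tprod A B) = bcirc A * bcirc B := by
  ext ⟨i, k⟩ ⟨j, l⟩
  simp only [bcirc, Tensor.tprod, Matrix.mul_apply, Matrix.of_apply, Fintype.sum_prod_type]
  refine Finset.sum_congr rfl fun j' _ => ?_
  refine Fintype.sum_equiv (Equiv.addRight l) _ _ fun l' => ?_
  rw [Equiv.coe_addRight, add_sub_cancel_right, sub_add_eq_sub_sub, sub_right_comm]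

lemma aux_bcirc_ttrans [NeZero p] (A : Tensor I J p) :
    bcirc (ttrans A) = (bcirc A)ᵀ := by
  ext ⟨j, k⟩ ⟨i, l⟩
  simp only [bcirc, ttrans, Matrix.transpose_apply, Matrix.of_apply, neg_sub]

lemma aux_bcirc_tid [NeZero p] [DecidableEq I] :
    bcirc (tid I p) = (1 : Matrix (I × Fin p) (I × Fin p) ℝ) := by
  ext ⟨i, k⟩ ⟨j, l⟩
  simp only [bcirc, tid, Matrix.of_apply, Matrix.one_apply, Prod.mk.injEq]
  have : ((k - l : Fin p) : ℕ) = 0 ↔ k = l := by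
    rw [← Fin.val_zero p, Fin.val_eq_val, sub_eq_zero]
  by_cases h1 : i = j <;> by_cases h2 : k = l <;> simp [h1, h2, this]

lemma aux_tinv_spec [Fintype I] [DecidableEq I] {S : Tensor I I p} (h : TInvertible S) :
    tprod S (tinv S) = tid I p ∧ tprod (tinv S) S = tid I p := by
  rw [tinv, dif_pos h]
  exact h.choose_spec

lemma aux_unfold_tprod {S : Type*} [Fintype J] (A : Tensor I J p) (B : Tensor J S p) :
    unfold (tprod A B) = bcirc A * unfold B := by
  ext ⟨j, k⟩ t
  simp only [unfold, Tensor.tprod, bcirc, Matrix.mul_apply, Matrix.of_apply, Fintype.sum_prod_type]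

/-- `bcirc (proj M)` is symmetric and idempotent. -/
lemma aux_proj_matrix [NeZero p] [Fintype I] [DecidableEq I] [Fintype J]
    (M : Tensor I J p) (hM : TInvertible (tprod M (ttrans M))) :
    (bcirc (proj M))ᵀ = bcirc (proj M) ∧
      bcirc (proj M) * bcirc (proj M) = bcirc (proj M) := by
  classical
  set B := bcirc M with hB
  set C := bcirc (tprod M (ttrans M)) with hC
  set Ninv := bcirc (tinv (tprod M (ttrans M))) with hNinv
  have hCB : C = B * Bᵀ := by rw [hC, aux_bcirc_tprod, aux_bcirc_ttrans]
  obtain ⟨h1, h2⟩ := aux_tinv_spec hM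
  have hCN : C * Ninv = 1 := by
    rw [hC, hNinv, ← aux_bcirc_tprod, h1, aux_bcirc_tid]
  have hNC : Ninv * C = 1 := by
    rw [hC, hNinv, ← aux_bcirc_tprod, h2, aux_bcirc_tid]
  have hCsym : Cᵀ = C := by rw [hCB]; simp [Matrix.transpose_mul]
  have hNsym : Ninvᵀ = Ninv := by
    have h3 : Ninvᵀ * C = 1 := by
      have h4 := congrArg Matrix.transpose hCN
      rwa [Matrix.transpose_mul, hCsym, Matrix.transpose_one] at h4
    calc Ninvᵀ = Ninvᵀ * (C * Ninv) := by rw [hCN, mul_one]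
    _ = (Ninvᵀ * C) * Ninv := (mul_assoc _ _ _).symm
    _ = Ninv := by rw [h3, one_mul]
  have hP : bcirc (proj M) = Bᵀ * (Ninv * B) := by
    rw [proj, aux_bcirc_tprod, aux_bcirc_tprod, aux_bcirc_ttrans]
  constructor
  · rw [hP]
    calc (Bᵀ * (Ninv * B))ᵀ = (Ninv * B)ᵀ * Bᵀᵀ := Matrix.transpose_mul _ _
    _ = (Bᵀ * Ninvᵀ) * Bᵀᵀ := by rw [Matrix.transpose_mul]
    _ = (Bᵀ * Ninv) * B := by rw [hNsym, Matrix.transpose_transpose]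
    _ = Bᵀ * (Ninv * B) := Matrix.mul_assoc _ _ _
  · rw [hP]
    calc Bᵀ * (Ninv * B) * (Bᵀ * (Ninv * B))
        = Bᵀ * ((Ninv * (B * Bᵀ)) * (Ninv * B)) := by
          simp only [Matrix.mul_assoc]
    _ = Bᵀ * ((Ninv * C) * (Ninv * B)) := by rw [← hCB]
    _ = Bᵀ * (Ninv * B) := by rw [hNC, Matrix.one_mul]

/-- Rayleigh bound: `minEig Q * ‖x‖² ≤ xᵀ Q x` for any `x`. -/
lemma aux_rayleigh [Fintype I] (Q : Matrix I I ℝ) (x : I → ℝ) :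
    minEig Q * (∑ i, x i ^ 2) ≤ ∑ i, x i * Q.mulVec x i := by
  by_cases hx : ∑ i, x i ^ 2 = 0
  · have hx0 : ∀ i, x i = 0 := by
      intro i
      have := (Finset.sum_eq_zero_iff_of_nonneg (fun i _ => sq_nonneg (x i))).mp hx i
        (Finset.mem_univ i)
      exact pow_eq_zero_iff (by norm_num) |>.mp this
    simp [hx, hx0]
  · have hpos : 0 < ∑ i, x i ^ 2 :=
      lt_of_le_of_ne (Finset.sum_nonneg fun i _ => sq_nonneg (x i)) (Ne.symm hx)
    set c : ℝ := Real.sqrt (∑ i, x i ^ 2) with hc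
    have hcpos : 0 < c := Real.sqrt_pos.mpr hpos
    have hc2 : c ^ 2 = ∑ i, x i ^ 2 := Real.sq_sqrt hpos.le
    set y : I → ℝ := fun i => x i / c with hy
    have hynorm : ∑ i, y i ^ 2 = 1 := by
      simp only [hy, div_pow]
      rw [← Finset.sum_div, ← hc2, div_self (by positivity)]
    have hmem : (∑ i, y i * Q.mulVec y i) ∈
        {r : ℝ | ∃ z : I → ℝ, (∑ i, (z i) ^ 2) = 1 ∧ r = ∑ i, z i * Q.mulVec z i} :=
      ⟨y, hynorm, rfl⟩
    have hbdd : BddBelow {r : ℝ | ∃ z : I → ℝ, (∑ i, (z i) ^ 2) = 1 ∧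
        r = ∑ i, z i * Q.mulVec z i} := by
      refine ⟨-(∑ i, ∑ j, |Q i j|), fun r hr => ?_⟩
      obtain ⟨z, hz, rfl⟩ := hr
      have hz1 : ∀ i, |z i| ≤ 1 := by
        intro i
        have h1 : z i ^ 2 ≤ 1 := hz ▸ Finset.single_le_sum
          (fun j _ => sq_nonneg (z j)) (Finset.mem_univ i)
        nlinarith [abs_nonneg (z i), sq_abs (z i)]
      have : |∑ i, z i * Q.mulVec z i| ≤ ∑ i, ∑ j, |Q i j| := by
        calc |∑ i, z i * Q.mulVec z i| ≤ ∑ i, |z i * Q.mulVec z i| :=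
              Finset.abs_sum_le_sum_abs _ _
        _ ≤ ∑ i, ∑ j, |Q i j| := by
            refine Finset.sum_le_sum fun i _ => ?_
            rw [abs_mul]
            calc |z i| * |Q.mulVec z i| ≤ 1 * |Q.mulVec z i| := by
                  exact mul_le_mul_of_nonneg_right (hz1 i) (abs_nonneg _)
            _ = |∑ j, Q i j * z j| := by rw [one_mul]; rfl
            _ ≤ ∑ j, |Q i j * z j| := Finset.abs_sum_le_sum_abs _ _
            _ ≤ ∑ j, |Q i j| := by
                refine Finset.sum_le_sum fun j _ => ?_
                rw [abs_mul]
                nlinarith [abs_nonneg (Q i j), hz1 j, abs_nonneg (z j)]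
      linarith [neg_abs_le (∑ i, z i * Q.mulVec z i)]
    have hle : minEig Q ≤ ∑ i, y i * Q.mulVec y i := csInf_le hbdd hmem
    have hxy : ∀ i, x i = c * y i := by
      intro i; rw [hy]; field_simp
    have hmv : Q.mulVec x = fun i => c * Q.mulVec y i := by
      ext i
      simp only [Matrix.mulVec, dotProduct]
      rw [Finset.mul_sum]
      exact Finset.sum_congr rfl fun j _ => by rw [hxy j]; ring
    have hxQ : ∑ i, x i * Q.mulVec x i = c ^ 2 * ∑ i, y i * Q.mulVec y i := by
      rw [Finset.mul_sum]
      refine Finset.sum_congr rfl fun i _ => ?_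
      rw [hxy i, hmv]; ring
    rw [← hc2, hxQ]
    calc minEig Q * c ^ 2 = c ^ 2 * minEig Q := by ring
    _ ≤ c ^ 2 * ∑ i, y i * Q.mulVec y i :=
          mul_le_mul_of_nonneg_left hle (by positivity)

/-- For a symmetric idempotent `P`, `‖Px‖² = xᵀ P x`. -/
lemma aux_sq_proj [Fintype I] (P : Matrix I I ℝ) (hsym : Pᵀ = P) (hidem : P * P = P)
    (x : I → ℝ) : ∑ i, (P.mulVec x i) ^ 2 = ∑ i, x i * P.mulVec x i := by
  have h1 : ∑ i, (P.mulVec x i) ^ 2 = (P.mulVec x) ⬝ᵥ (P.mulVec x) := by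
    simp [dotProduct, sq]
  have h2 : ∑ i, x i * P.mulVec x i = x ⬝ᵥ (P.mulVec x) := rfl
  rw [h1, h2]
  calc (P.mulVec x) ⬝ᵥ (P.mulVec x) = (x ᵥ* Pᵀ) ⬝ᵥ (P.mulVec x) := by
        rw [Matrix.vecMul_transpose]
  _ = ((x ᵥ* Pᵀ) ᵥ* P) ⬝ᵥ x := Matrix.dotProduct_mulVec _ _ _
  _ = (x ᵥ* (Pᵀ * P)) ⬝ᵥ x := by rw [Matrix.vecMul_vecMul]
  _ = (x ᵥ* P) ⬝ᵥ x := by rw [hsym, hidem]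
  _ = x ⬝ᵥ P.mulVec x := (Matrix.dotProduct_mulVec _ _ _).symm

end AuxLemmas

open Tensor in
/-- for tensors `M i` with `M i ∗ (M i)ᵀ` t-invertible and convex weights `w`,
`Σ_i w i ‖P_{M i} ∗ X‖_F² ≥ σ_min(Σ_i w i • bcirc (P_{M i})) ⬝ ‖X‖_F²`. -/
theorem stmt3 {n p r s : ℕ} (l : Fin r → ℕ)
    (M : (i : Fin r) → Tensor (Fin (l i)) (Fin n) p)
    (hM : ∀ i, TInvertible (tprod (M i) (ttrans (M i))))
    (w : Fin r → ℝ) (hw : ∀ i, 0 ≤ w i) (hwsum : ∑ i, w i = 1)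
    (X : Tensor (Fin n) (Fin s) p) :
    minEig (∑ i, w i • bcirc (proj (M i))) * frobSq X ≤
      ∑ i, w i * frobSq (tprod (proj (M i)) X) := by
  classical
  rcases Nat.eq_zero_or_pos p with hp | hp
  · subst hp
    have hX : frobSq X = 0 := by simp [frobSq]
    have hT : ∀ i, frobSq (tprod (proj (M i)) X) = 0 := by
      intro i; simp [frobSq]
    simp [hX, hT]
  · haveI : NeZero p := ⟨hp.ne'⟩
    set Q : Matrix (Fin n × Fin p) (Fin n × Fin p) ℝ :=
      ∑ i, w i • bcirc (proj (M i)) with hQ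
    set x : Fin s → (Fin n × Fin p) → ℝ := fun t jk => X jk.1 t jk.2 with hx
    have hfrobX : frobSq X = ∑ t, ∑ jk : Fin n × Fin p, x t jk ^ 2 := by
      rw [frobSq]
      rw [Finset.sum_comm]
      refine Finset.sum_congr rfl fun t _ => ?_
      rw [Fintype.sum_prod_type]
    have hmv : ∀ (i : Fin r) (t : Fin s) (j : Fin n) (k : Fin p),
        tprod (proj (M i)) X j t k = (bcirc (proj (M i))).mulVec (x t) (j, k) := by
      intro i t j k
      simp only [Tensor.tprod, bcirc, Matrix.mulVec, dotProduct, Matrix.of_apply,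
        Fintype.sum_prod_type, hx]
    have hfrobT : ∀ i, frobSq (tprod (proj (M i)) X) =
        ∑ t, ∑ jk : Fin n × Fin p, ((bcirc (proj (M i))).mulVec (x t) jk) ^ 2 := by
      intro i
      rw [frobSq, Finset.sum_comm]
      refine Finset.sum_congr rfl fun t _ => ?_
      rw [Fintype.sum_prod_type]
      exact Finset.sum_congr rfl fun j _ => Finset.sum_congr rfl fun k _ => by
        rw [hmv i t j k]
    have hproj : ∀ i, (bcirc (proj (M i)))ᵀ = bcirc (proj (M i)) ∧
        bcirc (proj (M i)) * bcirc (proj (M i)) = bcirc (proj (M i)) :=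
      fun i => aux_proj_matrix (M i) (hM i)
    have hcol : ∀ t : Fin s,
        minEig Q * (∑ jk : Fin n × Fin p, x t jk ^ 2) ≤
          ∑ i, w i * ∑ jk : Fin n × Fin p, ((bcirc (proj (M i))).mulVec (x t) jk) ^ 2 := by
      intro t
      have hray := aux_rayleigh Q (x t)
      have hQx : ∑ jk, x t jk * Q.mulVec (x t) jk =
          ∑ i, w i * ∑ jk : Fin n × Fin p, ((bcirc (proj (M i))).mulVec (x t) jk) ^ 2 := by
        have hQmv : Q.mulVec (x t) =
            fun jk => ∑ i, w i * (bcirc (proj (M i))).mulVec (x t) jk := by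
          rw [hQ]
          ext jk
          simp only [Matrix.mulVec, dotProduct]
          calc ∑ y, (∑ i, w i • bcirc (proj (M i))) jk y * x t y
              = ∑ y, ∑ i, w i * (bcirc (proj (M i)) jk y * x t y) := by
                refine Finset.sum_congr rfl fun y _ => ?_
                rw [Matrix.sum_apply, Finset.sum_mul]
                exact Finset.sum_congr rfl fun i _ => by
                  rw [Matrix.smul_apply, smul_eq_mul]; ring
          _ = ∑ i, ∑ y, w i * (bcirc (proj (M i)) jk y * x t y) := Finset.sum_comm
          _ = ∑ i, w i * ∑ y, bcirc (proj (M i)) jk y * x t y := by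
                exact Finset.sum_congr rfl fun i _ => (Finset.mul_sum _ _ _).symm
        calc ∑ jk, x t jk * Q.mulVec (x t) jk
            = ∑ jk, ∑ i, w i * (x t jk * (bcirc (proj (M i))).mulVec (x t) jk) := by
              refine Finset.sum_congr rfl fun jk _ => ?_
              rw [hQmv, Finset.mul_sum]
              exact Finset.sum_congr rfl fun i _ => by ring
        _ = ∑ i, w i * ∑ jk, x t jk * (bcirc (proj (M i))).mulVec (x t) jk := by
              rw [Finset.sum_comm]
              exact Finset.sum_congr rfl fun i _ => by rw [Finset.mul_sum]
        _ = ∑ i, w i * ∑ jk : Fin n × Fin p,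
              ((bcirc (proj (M i))).mulVec (x t) jk) ^ 2 := by
              refine Finset.sum_congr rfl fun i _ => ?_
              rw [aux_sq_proj _ (hproj i).1 (hproj i).2]
      linarith [hray, hQx.ge, hQx.le]
    calc minEig Q * frobSq X
        = ∑ t, minEig Q * (∑ jk : Fin n × Fin p, x t jk ^ 2) := by
          rw [hfrobX, Finset.mul_sum]
    _ ≤ ∑ t, ∑ i, w i * ∑ jk : Fin n × Fin p,
          ((bcirc (proj (M i))).mulVec (x t) jk) ^ 2 :=
          Finset.sum_le_sum fun t _ => hcol t
    _ = ∑ i, w i * frobSq (tprod (proj (M i)) X) := by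
          rw [Finset.sum_comm]
          refine Finset.sum_congr rfl fun i _ => ?_
          rw [hfrobT i, Finset.mul_sum]
end
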